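/- arXiv:1709.03154 — 4 statements merged into one kernel-verified Lean document; each statement's English description precedes it below -/
import Mathlib

section
/- If f is an upper semi-continuous log-concave probability density on ℝ^d, then there exist α > 0 and β ∈ ℝ such that f(x) ≤ exp(−α‖x‖ + β) for all x ∈ ℝ^d. -/
open MeasureTheory Filter Set
open scoped ENNReal Topology

noncomputable section

/-- `ℝ^d` with its Euclidean norm and Lebesgue measure. -/
abbrev Rd (d : ℕ) : Type := EuclideanSpace ℝ (Fin d)

/-- A nonnegative function is log-concave (`log f` is concave, with `log 0 := -∞`),
expressed multiplicatively via `f x ^ (1-t) * f y ^ t ≤ f ((1-t) • x + t • y)`. -/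
def IsLogConcaveFn {E : Type*} [AddCommGroup E] [Module ℝ E] (f : E → ℝ) : Prop :=
  (∀ x, 0 ≤ f x) ∧
  ∀ x y : E, ∀ t : ℝ, t ∈ Set.Icc (0:ℝ) 1 →
    f x ^ (1 - t) * f y ^ t ≤ f ((1 - t) • x + t • y)

/-- A probability density with respect to the (Lebesgue) measure of a `MeasureSpace`. -/
def IsDensity {E : Type*} [MeasureSpace E] (f : E → ℝ) : Prop :=
  (∀ x, 0 ≤ f x) ∧ Measurable f ∧ ∫⁻ x, ENNReal.ofReal (f x) = 1

/-- Membership in the class `F_d`: an upper semi-continuous log-concave probability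
density. -/
def IsLCDensity {E : Type*} [MeasureSpace E] [TopologicalSpace E] [AddCommGroup E]
    [Module ℝ E] (f : E → ℝ) : Prop :=
  IsDensity f ∧ UpperSemicontinuous f ∧ IsLogConcaveFn f

/-- Membership in the class `P_d`: probability measures with finite first moment that are
not concentrated on any affine hyperplane `{x | l x = c}` (`l` a nonzero linear
functional). -/
def MemP {E : Type*} [NormedAddCommGroup E] [NormedSpace ℝ E] [MeasureSpace E]
    (P : Measure E) : Prop :=
  IsProbabilityMeasure P ∧ Integrable (fun x => ‖x‖) P ∧
  ∀ (l : E →ₗ[ℝ] ℝ) (c : ℝ), l ≠ 0 → P {x | l x = c} < 1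

/-- The log-concave projection predicate: `fs ∈ F_d` maximises `∫ log f dP` over `F_d`
(candidates whose objective is `-∞`, i.e. that vanish on a set of positive `P`-measure or
have non-integrable logarithm, are trivially dominated). -/
def IsLCProj {E : Type*} [NormedAddCommGroup E] [NormedSpace ℝ E] [MeasureSpace E]
    (P : Measure E) (fs : E → ℝ) : Prop :=
  IsLCDensity fs ∧ (∀ᵐ x ∂P, 0 < fs x) ∧ Integrable (fun x => Real.log (fs x)) P ∧
  ∀ g : E → ℝ, IsLCDensity g → (∀ᵐ x ∂P, 0 < g x) →
    Integrable (fun x => Real.log (g x)) P →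
    ∫ x, Real.log (g x) ∂P ≤ ∫ x, Real.log (fs x) ∂P

/-- `log y` with values in `[-∞, ∞)`, with the convention `log 0 := -∞`. -/
def elog (y : ℝ) : EReal := if y ≤ 0 then ⊥ else ((Real.log y : ℝ) : EReal)

/-- Positive part of an extended real number, as an `ℝ≥0∞`. -/
def epos (a : EReal) : ℝ≥0∞ := if a = ⊤ then ⊤ else ENNReal.ofReal a.toReal

/-- `e^a` for an extended real `a`, valued in `[0,∞]`. -/
def expE (a : EReal) : ℝ≥0∞ :=
  if a = ⊥ then 0 else if a = ⊤ then ⊤ else ENNReal.ofReal (Real.exp a.toReal)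

/-- Integral of an `EReal`-valued function: positive part minus negative part. -/
def erealIntegral {α : Type*} [MeasurableSpace α] (P : Measure α) (φ : α → EReal) : EReal :=
  ((∫⁻ x, epos (φ x) ∂P : ℝ≥0∞) : EReal) - ((∫⁻ x, epos (-(φ x)) ∂P : ℝ≥0∞) : EReal)

/-- The class `Φ`: upper semi-continuous, concave functions `φ : E → [-∞, ∞)` with
`φ(x) → -∞` as `‖x‖ → ∞`. -/
def MemPhi {E : Type*} [NormedAddCommGroup E] [NormedSpace ℝ E] (φ : E → EReal) : Prop :=
  (∀ x, φ x ≠ ⊤) ∧ UpperSemicontinuous φ ∧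
  (∀ x y : E, ∀ t : ℝ, t ∈ Set.Icc (0:ℝ) 1 →
    (((1 - t : ℝ)) : EReal) * φ x + ((t : ℝ) : EReal) * φ y ≤ φ ((1 - t) • x + t • y)) ∧
  Tendsto φ (Filter.comap (fun x => ‖x‖) Filter.atTop) (nhds ⊥)

/-- The functional `L(φ, P) = ∫ φ dP - ∫ e^φ dx`. -/
def Lfun {E : Type*} [NormedAddCommGroup E] [NormedSpace ℝ E] [MeasureSpace E]
    (φ : E → EReal) (P : Measure E) : EReal :=
  erealIntegral P φ - ((∫⁻ x, expE (φ x) : ℝ≥0∞) : EReal)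

/-- `L*(P) = sup_{φ ∈ Φ} L(φ, P)`. -/
def Lstar {E : Type*} [NormedAddCommGroup E] [NormedSpace ℝ E] [MeasureSpace E]
    (P : Measure E) : EReal :=
  ⨆ (φ : E → EReal) (_ : MemPhi φ), Lfun φ P

/-- Action of a matrix on a Euclidean vector. -/
def mulVE {m d : ℕ} (A : Matrix (Fin m) (Fin d) ℝ) (x : Rd d) : Rd m :=
  (WithLp.equiv 2 (Fin m → ℝ)).symm (A.mulVec ((WithLp.equiv 2 (Fin d → ℝ)) x))

/-!
The superlevel sets `{f ≥ t}` of a log-concave density are convex, and by Markov's inequality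
they have finite volume when `t > 0`. Some `{f ≥ t}` has positive volume, so `{f ≥ t / 2}` is a
convex set of finite volume with nonempty interior; such a set is bounded, since otherwise it
would contain arbitrarily many disjoint balls of a fixed radius. Hence `{f ≥ t / 2}` lies in a
ball `B(x₀, R)` around a point with `f x₀ ≥ t`, so `f < t / 2` on the sphere of radius `R`.
Comparing `x` outside the ball with `x₀` and the point where the segment `[x₀, x]` crosses that
sphere, log-concavity gives `f x ≤ t · 2 ^ (-‖x - x₀‖ / R)`; inside the ball `f` is bounded by
upper semicontinuity.
-/

open Metric

section Density

variable {E : Type*} [MeasureSpace E] {f : E → ℝ}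

theorem IsDensity.volume_superlevel_ne_top (hf : IsDensity f) {t : ℝ} (ht : 0 < t) :
    volume {x | t ≤ f x} ≠ ⊤ := by
  have hmarkov := meas_ge_le_lintegral_div (μ := volume) hf.2.1.ennreal_ofReal.aemeasurable
    (ENNReal.ofReal_pos.2 ht).ne' ENNReal.ofReal_ne_top
  rw [hf.2.2] at hmarkov
  refine ne_top_of_le_ne_top ?_ ((measure_mono fun x hx => ?_).trans hmarkov)
  · exact ENNReal.div_ne_top ENNReal.one_ne_top (ENNReal.ofReal_pos.2 ht).ne'
  · exact ENNReal.ofReal_le_ofReal hx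

theorem IsDensity.exists_volume_superlevel_pos (hf : IsDensity f) :
    ∃ t, 0 < t ∧ 0 < volume {x | t ≤ f x} := by
  have hsupp : volume {x | 0 < f x} ≠ 0 := by
    have h :=
      (lintegral_pos_iff_support hf.2.1.ennreal_ofReal).1 (by rw [hf.2.2]; exact one_pos)
    simpa [Function.support, ENNReal.ofReal_pos] using h.ne'
  have hunion : {x | 0 < f x} = ⋃ n : ℕ, {x | 1 / ((n : ℝ) + 1) ≤ f x} := by
    ext x
    simp only [Set.mem_iUnion]
    exact ⟨fun (h : 0 < f x) => (exists_nat_one_div_lt h).imp fun _ => le_of_lt,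
      fun ⟨_, (hn : _ ≤ f x)⟩ => show 0 < f x from Nat.one_div_pos_of_nat.trans_le hn⟩
  rw [hunion, Ne, measure_iUnion_null_iff, not_forall] at hsupp
  obtain ⟨n, hn⟩ := hsupp
  exact ⟨_, Nat.one_div_pos_of_nat, pos_iff_ne_zero.2 hn⟩

end Density

section LogConcave

variable {E : Type*} [AddCommGroup E] [Module ℝ E] {f : E → ℝ}

theorem IsLogConcaveFn.convex_superlevel (hf : IsLogConcaveFn f) (t : ℝ) :
    Convex ℝ {x | t ≤ f x} := by
  intro x hx y hy a b ha hb hab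
  change t ≤ f x at hx
  change t ≤ f y at hy
  change t ≤ f (a • x + b • y)
  rcases le_or_gt t 0 with ht | ht
  · exact ht.trans (hf.1 _)
  obtain rfl : a = 1 - b := by linarith
  calc t = t ^ (1 - b) * t ^ b := by rw [← Real.rpow_add ht, sub_add_cancel, Real.rpow_one]
    _ ≤ f x ^ (1 - b) * f y ^ b := by
        gcongr
        exact Real.rpow_nonneg (hf.1 x) _
    _ ≤ f ((1 - b) • x + b • y) := hf.2 x y b ⟨hb, by linarith⟩

end LogConcave

theorem le_exp_neg_mul_norm_add_of_le_mul_exp {E : Type*} [SeminormedAddCommGroup E]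
    {f : E → ℝ} {x₀ : E} {α C : ℝ} (hα : 0 ≤ α) (hC : 0 < C)
    (h : ∀ x, f x ≤ C * Real.exp (-α * ‖x - x₀‖)) (x : E) :
    f x ≤ Real.exp (-α * ‖x‖ + (Real.log C + α * ‖x₀‖)) := by
  calc f x ≤ C * Real.exp (-α * ‖x - x₀‖) := h x
    _ = Real.exp (Real.log C + -α * ‖x - x₀‖) := by rw [Real.exp_add, Real.exp_log hC]
    _ ≤ Real.exp (-α * ‖x‖ + (Real.log C + α * ‖x₀‖)) := by
        refine Real.exp_le_exp.2 ?_
        nlinarith [norm_sub_norm_le x x₀]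

section Normed

variable {E : Type*} [NormedAddCommGroup E] [NormedSpace ℝ E]

theorem Convex.ball_subset_of_ball_subset {s : Set E} (hs : Convex ℝ s) {x y : E} {r c : ℝ}
    (hball : ball x r ⊆ s) (hy : y ∈ s) (hc₀ : 0 ≤ c) (hc₁ : c < 1) :
    ball (x + c • (y - x)) ((1 - c) * r) ⊆ s := by
  intro p hp
  have hc : 0 < 1 - c := by linarith
  set q := x + (1 - c)⁻¹ • (p - (x + c • (y - x)))
  have hq : q ∈ ball x r := by
    rw [mem_ball, dist_eq_norm] at hp ⊢
    rw [add_sub_cancel_left, norm_smul, Real.norm_of_nonneg (inv_nonneg.2 hc.le),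
      inv_mul_lt_iff₀ hc]
    exact hp
  have hp_eq : p = (1 - c) • q + c • y := by
    simp only [q, smul_add, smul_smul, mul_inv_cancel₀ hc.ne', one_smul]
    module
  rw [hp_eq]
  exact hs (hball hq) hy hc.le hc₀ (by ring)

theorem IsLogConcaveFn.le_mul_exp_of_superlevel_subset_ball {f : E → ℝ}
    (hf : IsLogConcaveFn f) {x₀ : E} {t R : ℝ} (ht : 0 < t) (hx₀ : t ≤ f x₀)
    (hR : {x | t / 2 ≤ f x} ⊆ ball x₀ R) {x : E} (hx : R ≤ ‖x - x₀‖) :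
    f x ≤ t * Real.exp (-(Real.log 2 / R) * ‖x - x₀‖) := by
  have hR₀ : 0 < R := pos_of_mem_ball (hR (show t / 2 ≤ f x₀ by linarith))
  set D := ‖x - x₀‖
  have hD : 0 < D := hR₀.trans_le hx
  set l := R / D
  have hl₀ : 0 < l := div_pos hR₀ hD
  have hl₁ : l ≤ 1 := div_le_one_of_le₀ hx hD.le
  rcases (hf.1 x).eq_or_lt with hfx | hfx
  · rw [← hfx]; positivity
  have hz : f ((1 - l) • x₀ + l • x) < t / 2 := by
    by_contra! h
    have hz := hR h
    rw [mem_ball, dist_eq_norm, show (1 - l) • x₀ + l • x - x₀ = l • (x - x₀) by module,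
      norm_smul, Real.norm_of_nonneg hl₀.le, div_mul_cancel₀ _ hD.ne'] at hz
    exact hz.false
  have hmix : t ^ (1 - l) * f x ^ l < t / 2 :=
    calc t ^ (1 - l) * f x ^ l ≤ f x₀ ^ (1 - l) * f x ^ l := by
          gcongr
      _ ≤ f ((1 - l) • x₀ + l • x) := hf.2 x₀ x l ⟨hl₀.le, hl₁⟩
      _ < t / 2 := hz
  have hlog := Real.log_lt_log (by positivity) hmix
  rw [Real.log_mul (by positivity) (by positivity), Real.log_rpow ht, Real.log_rpow hfx,
    Real.log_div ht.ne' two_ne_zero] at hlog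
  have hlogfx : Real.log (f x) < Real.log t + -(Real.log 2 / R) * D := by
    have : Real.log (f x) * l < (Real.log t + -(Real.log 2 / R) * D) * l := by
      have : (Real.log t + -(Real.log 2 / R) * D) * l = Real.log t * l - Real.log 2 := by
        simp only [l]; field_simp; ring
      linarith
    exact lt_of_mul_lt_mul_right this hl₀.le
  calc f x = Real.exp (Real.log (f x)) := (Real.exp_log hfx).symm
    _ ≤ Real.exp (Real.log t + -(Real.log 2 / R) * D) := Real.exp_le_exp.2 hlogfx.le
    _ = t * Real.exp (-(Real.log 2 / R) * D) := by rw [Real.exp_add, Real.exp_log ht]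

theorem IsLogConcaveFn.exists_exp_bound_of_isBounded_superlevel [ProperSpace E] {f : E → ℝ}
    (hf : IsLogConcaveFn f) (husc : UpperSemicontinuous f) {x₀ : E} {t : ℝ} (ht : 0 < t)
    (hx₀ : t ≤ f x₀) (hb : Bornology.IsBounded {x | t / 2 ≤ f x}) :
    ∃ α : ℝ, 0 < α ∧ ∃ β : ℝ, ∀ x, f x ≤ Real.exp (-α * ‖x‖ + β) := by
  obtain ⟨R, hR⟩ := hb.subset_ball x₀
  obtain ⟨M, hM⟩ :=
    (husc.upperSemicontinuousOn _).bddAbove_of_isCompact (isCompact_closedBall x₀ R)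
  have hR₀ : 0 < R := pos_of_mem_ball (hR (show t / 2 ≤ f x₀ by linarith))
  set α := Real.log 2 / R
  have hα : 0 < α := div_pos (Real.log_pos one_lt_two) hR₀
  have hC : 0 < max M t := lt_max_of_lt_right ht
  refine ⟨α, hα, _, le_exp_neg_mul_norm_add_of_le_mul_exp (x₀ := x₀)
    (C := max M t * Real.exp (α * R)) hα.le (by positivity) fun x => ?_⟩
  rcases le_or_gt ‖x - x₀‖ R with hx | hx
  · calc f x ≤ max M t :=
          (hM (mem_image_of_mem f (mem_closedBall_iff_norm.2 hx))).trans (le_max_left _ _)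
      _ ≤ max M t * Real.exp (α * R + -α * ‖x - x₀‖) :=
          le_mul_of_one_le_right hC.le (Real.one_le_exp (by nlinarith))
      _ = max M t * Real.exp (α * R) * Real.exp (-α * ‖x - x₀‖) := by
          rw [Real.exp_add, mul_assoc]
  · calc f x ≤ t * Real.exp (-α * ‖x - x₀‖) :=
          hf.le_mul_exp_of_superlevel_subset_ball ht hx₀ hR hx.le
      _ ≤ max M t * Real.exp (α * R) * Real.exp (-α * ‖x - x₀‖) := by
          gcongr
          exact (le_max_right _ _).trans
            (le_mul_of_one_le_right hC.le (Real.one_le_exp (by positivity)))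

end Normed

section Haar

variable {E : Type*} [NormedAddCommGroup E] [NormedSpace ℝ E] [MeasurableSpace E]
  [BorelSpace E] (μ : Measure E) [μ.IsAddHaarMeasure]

theorem Convex.interior_nonempty_of_measure_ne_zero [FiniteDimensional ℝ E] {s : Set E}
    (hs : Convex ℝ s) (h : μ s ≠ 0) : (interior s).Nonempty := by
  by_contra hint
  rw [hs.interior_nonempty_iff_affineSpan_eq_top] at hint
  exact h (measure_mono_null (subset_affineSpan ℝ s) (Measure.addHaar_affineSubspace μ _ hint))

theorem natCast_mul_measure_ball_le {s : Set E} {x u : E} {ρ : ℝ} {N : ℕ}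
    (hu : 2 * ρ ≤ ‖u‖) (hsub : ∀ k < N, ball (x + (k : ℝ) • u) ρ ⊆ s) :
    N * μ (ball x ρ) ≤ μ s := by
  have hdisj :
      (Finset.range N : Set ℕ).PairwiseDisjoint fun k => ball (x + (k : ℝ) • u) ρ := by
    intro j _ k _ hjk
    apply ball_disjoint_ball
    rw [dist_eq_norm, add_sub_add_left_eq_sub, ← sub_smul, norm_smul, Real.norm_eq_abs]
    have : (1 : ℝ) ≤ |(j : ℝ) - k| := by
      rcases Nat.lt_or_gt_of_ne hjk with h | h
      · have : (j : ℝ) + 1 ≤ k := by exact_mod_cast h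
        exact le_abs.2 (Or.inr (by linarith))
      · have : (k : ℝ) + 1 ≤ j := by exact_mod_cast h
        exact le_abs.2 (Or.inl (by linarith))
    nlinarith [norm_nonneg u]
  calc (N : ℝ≥0∞) * μ (ball x ρ)
        = ∑ k ∈ Finset.range N, μ (ball (x + (k : ℝ) • u) ρ) := by
        simp only [Measure.addHaar_ball_center, Finset.sum_const, Finset.card_range,
          nsmul_eq_mul]
    _ = μ (⋃ k ∈ Finset.range N, ball (x + (k : ℝ) • u) ρ) :=
        (measure_biUnion_finset hdisj fun _ _ => measurableSet_ball).symm
    _ ≤ μ s := measure_mono (Set.iUnion₂_subset fun k hk => hsub k (Finset.mem_range.1 hk))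

theorem Convex.isBounded_of_measure_ne_top {s : Set E} (hs : Convex ℝ s)
    (hint : (interior s).Nonempty) (hμ : μ s ≠ ⊤) : Bornology.IsBounded s := by
  obtain ⟨x, hx⟩ := hint
  obtain ⟨r, hr, hball⟩ := Metric.isOpen_iff.1 isOpen_interior x hx
  replace hball := hball.trans interior_subset
  have hv : μ (ball x (r / 2)) ≠ 0 := (measure_ball_pos μ x (half_pos hr)).ne'
  obtain ⟨N, hN⟩ := ENNReal.exists_nat_mul_gt hv hμ
  refine isBounded_closedBall.subset fun y hy => (?_ : y ∈ closedBall x (2 * N * r))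
  rw [mem_closedBall, dist_eq_norm]
  by_contra! hfar
  have hD : 0 < ‖y - x‖ := lt_of_le_of_lt (by positivity) hfar
  set u := (r / ‖y - x‖) • (y - x)
  have hu : ‖u‖ = r := by
    rw [norm_smul, Real.norm_of_nonneg (by positivity), div_mul_cancel₀ _ hD.ne']
  refine hN.not_ge (natCast_mul_measure_ball_le μ (u := u) (by linarith) fun k hk => ?_)
  have hc : (k : ℝ) * r / ‖y - x‖ ≤ 1 / 2 := by
    rw [div_le_iff₀ hD]
    have : (k : ℝ) + 1 ≤ N := by exact_mod_cast hk
    nlinarith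
  have hsub :=
    hs.ball_subset_of_ball_subset hball hy (by positivity) (hc.trans_lt (by norm_num))
  have hku : (k : ℝ) • u = ((k : ℝ) * r / ‖y - x‖) • (y - x) := by
    rw [smul_smul, mul_div_assoc]
  rw [hku]
  exact (ball_subset_ball (by nlinarith)).trans hsub

end Haar

/-- Every upper semi-continuous log-concave density on `ℝ^d` has an exponentially
decaying upper bound. -/
theorem statement1 (d : ℕ) (f : Rd d → ℝ) (hf : IsLCDensity f) :
    ∃ α : ℝ, 0 < α ∧ ∃ β : ℝ, ∀ x : Rd d, f x ≤ Real.exp (-α * ‖x‖ + β) := by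
  obtain ⟨hdens, husc, hlc⟩ := hf
  obtain ⟨t, ht, hpos⟩ := hdens.exists_volume_superlevel_pos
  obtain ⟨x₀, hx₀⟩ := nonempty_of_measure_ne_zero hpos.ne'
  have hsub : {x | t ≤ f x} ⊆ {x | t / 2 ≤ f x} := fun x (hx : t ≤ f x) =>
    show t / 2 ≤ f x by linarith
  have hconv := hlc.convex_superlevel (t / 2)
  have hint :=
    hconv.interior_nonempty_of_measure_ne_zero volume (hpos.trans_le (measure_mono hsub)).ne'
  exact hlc.exists_exp_bound_of_isBounded_superlevel husc ht hx₀
    (hconv.isBounded_of_measure_ne_top volume hint (hdens.volume_superlevel_ne_top (half_pos ht)))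
end
end

section
/- Let d = d₁ + d₂ with d₁, d₂ ∈ ℕ, and let f : ℝ^d → [0, ∞) be a (measurable) log-concave function. Then the marginal function x ↦ ∫_{ℝ^{d₂}} f(x, y) dy is log-concave on ℝ^{d₁}. -/
open MeasureTheory Filter Set
open scoped ENNReal Topology

noncomputable section

/-!
Prékopa's theorem is a consequence of the Prékopa–Leindler inequality: if
`h ((1 - t) • x + t • y) ≥ f x ^ (1 - t) * g y ^ t` for all `x, y`, then
`∫ h ≥ (∫ f) ^ (1 - t) * (∫ g) ^ t`. Log-concavity of `f` says exactly that the three slices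
`f (x, ·)`, `f (y, ·)` and `f ((1 - t) • x + t • y, ·)` satisfy this hypothesis on `ℝ^d₂`.

On `ℝ`, truncate `f` and `g` to bounded functions and rescale them so that `sup f = sup g = 1`.
For `0 < s < 1` the superlevel sets are then nonempty and
`{h > s} ⊇ (1 - t) • {f > s} + t • {g > s}`, so the one-dimensional Brunn–Minkowski inequality `|A + B| ≥ |A| + |B|` (translate `A` and `B`
so that they meet in one point of `A + B`) and the layer-cake formula give
`∫ h ≥ (1 - t) ∫ f + t ∫ g ≥ (∫ f) ^ (1 - t) * (∫ g) ^ t`. By Tonelli the inequality passes from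
`α` and `β` to `α × β`, applying it first on the fibres and then to the fibre integrals, hence
to `ℝⁿ` by induction.
-/

open scoped NNReal Pointwise

theorem ENNReal.rpow_mul_rpow_le_add {t : ℝ} (ht₀ : 0 < t) (ht₁ : t < 1) (a b : ℝ≥0∞) :
    a ^ (1 - t) * b ^ t ≤ ENNReal.ofReal (1 - t) * a + ENNReal.ofReal t * b := by
  have h1t : 0 < 1 - t := by linarith
  rcases eq_or_ne a ⊤ with rfl | ha
  · rw [ENNReal.mul_top (ENNReal.ofReal_pos.2 h1t).ne', top_add]
    exact le_top
  rcases eq_or_ne b ⊤ with rfl | hb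
  · rw [ENNReal.mul_top (ENNReal.ofReal_pos.2 ht₀).ne', add_top]
    exact le_top
  lift a to ℝ≥0 using ha
  lift b to ℝ≥0 using hb
  have key := NNReal.geom_mean_le_arith_mean2_weighted (1 - t).toNNReal t.toNNReal a b
    (by rw [← Real.toNNReal_add h1t.le ht₀.le]; simp)
  rw [Real.coe_toNNReal _ h1t.le, Real.coe_toNNReal _ ht₀.le] at key
  rw [← ENNReal.coe_rpow_of_nonneg _ h1t.le, ← ENNReal.coe_rpow_of_nonneg _ ht₀.le, ENNReal.ofReal,
    ENNReal.ofReal]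
  exact_mod_cast key

theorem MeasureTheory.lintegral_eq_lintegral_meas_ofReal_lt {α : Type*} [MeasurableSpace α]
    (μ : Measure α) {f : α → ℝ≥0∞} (hf : Measurable f) (hf_top : ∀ x, f x ≠ ⊤) :
    ∫⁻ x, f x ∂μ = ∫⁻ s in Ioi 0, μ {x | ENNReal.ofReal s < f x} := by
  have hlayer := lintegral_eq_lintegral_meas_lt μ (.of_forall fun x => (f x).toReal_nonneg)
    hf.ennreal_toReal.aemeasurable
  simp only [ENNReal.ofReal_toReal (hf_top _)] at hlayer
  rw [hlayer]
  refine setLIntegral_congr_fun measurableSet_Ioi fun s hs => ?_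
  simp only [ENNReal.ofReal_lt_iff_lt_toReal (le_of_lt hs) (hf_top _)]

theorem MeasureTheory.lintegral_eq_iSup_lintegral_min_natCast {α : Type*} [MeasurableSpace α]
    (μ : Measure α) {f : α → ℝ≥0∞} (hf : Measurable f) :
    ∫⁻ x, f x ∂μ = ⨆ n : ℕ, ∫⁻ x, min (f x) n ∂μ := by
  rw [← lintegral_iSup (fun n => hf.min measurable_const)
    fun m n hmn x => min_le_min_left _ (Nat.cast_le.2 hmn)]
  congr with x
  change f x = ⨆ n : ℕ, f x ⊓ n
  rw [← inf_iSup_eq, ENNReal.iSup_natCast, inf_top_eq]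

theorem Real.volume_add_volume_le_of_isCompact {A B : Set ℝ} (hA : IsCompact A)
    (hB : IsCompact B) (hA₀ : A.Nonempty) (hB₀ : B.Nonempty) :
    volume A + volume B ≤ volume (A + B) := by
  set a := sSup A
  set b := sInf B
  have haA : a ∈ A := hA.sSup_mem hA₀
  have hbB : b ∈ B := hB.sInf_mem hB₀
  have hunion : (· + b) '' A ∪ (a + ·) '' B ⊆ A + B := by
    rintro _ (⟨u, hu, rfl⟩ | ⟨v, hv, rfl⟩)
    exacts [add_mem_add hu hbB, add_mem_add haA hv]
  have hinter : (· + b) '' A ∩ (a + ·) '' B ⊆ {a + b} := by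
    rintro _ ⟨⟨u, hu, rfl⟩, v, hv, huv⟩
    have := le_csSup hA.bddAbove hu
    have := csInf_le hB.bddBelow hv
    simp only [mem_singleton_iff]
    linarith
  have hB' : MeasurableSet ((a + ·) '' B) :=
    (hB.image (continuous_const_add a)).isClosed.measurableSet
  calc volume A + volume B = volume ((· + b) '' A) + volume ((a + ·) '' B) := by simp
    _ = volume ((· + b) '' A ∪ (a + ·) '' B) + volume ((· + b) '' A ∩ (a + ·) '' B) :=
      (measure_union_add_inter _ hB').symm
    _ ≤ volume (A + B) + volume {a + b} := add_le_add (measure_mono hunion) (measure_mono hinter)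
    _ = volume (A + B) := by simp

theorem Real.volume_add_volume_le_of_add_subset {A B C : Set ℝ} (hA : MeasurableSet A)
    (hB : MeasurableSet B) (hA₀ : A.Nonempty) (hB₀ : B.Nonempty) (hC : A + B ⊆ C) :
    volume A + volume B ≤ volume C := by
  obtain ⟨a, ha⟩ := hA₀
  obtain ⟨b, hb⟩ := hB₀
  rw [hA.measure_eq_iSup_isCompact, hB.measure_eq_iSup_isCompact]
  simp only [iSup_and']
  refine ENNReal.biSup_add_biSup_le' ⟨∅, empty_subset _, isCompact_empty⟩
    ⟨∅, empty_subset _, isCompact_empty⟩ fun K ⟨hKA, hK⟩ L ⟨hLB, hL⟩ => ?_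
  -- `insert` makes the compact sets nonempty without leaving `A` and `B`
  calc volume K + volume L ≤ volume (insert a K) + volume (insert b L) :=
        add_le_add (measure_mono (subset_insert _ _)) (measure_mono (subset_insert _ _))
    _ ≤ volume (insert a K + insert b L) :=
        volume_add_volume_le_of_isCompact (hK.insert a) (hL.insert b)
          (insert_nonempty _ _) (insert_nonempty _ _)
    _ ≤ volume C := measure_mono <| (add_subset_add (insert_subset ha hKA)
        (insert_subset hb hLB)).trans hC

theorem Real.weighted_volume_superlevel_le_of_iSup_eq_one {t : ℝ} (ht₀ : 0 < t) (ht₁ : t < 1)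
    {f g h : ℝ → ℝ≥0∞} (hf : Measurable f) (hg : Measurable g) (hfs : ⨆ x, f x = 1)
    (hgs : ⨆ x, g x = 1) (hfgh : ∀ x y, f x ^ (1 - t) * g y ^ t ≤ h ((1 - t) * x + t * y))
    {s : ℝ} (hs₀ : 0 < s) (hs₁ : s < 1) :
    ENNReal.ofReal (1 - t) * volume {x | ENNReal.ofReal s < f x} +
      ENNReal.ofReal t * volume {y | ENNReal.ofReal s < g y} ≤
      volume {z | ENNReal.ofReal s < h z} := by
  have h1t : 0 < 1 - t := by linarith
  have hs : ENNReal.ofReal s < 1 := ENNReal.ofReal_lt_one.2 hs₁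
  set A := {x | ENNReal.ofReal s < f x}
  set B := {y | ENNReal.ofReal s < g y}
  have hA : MeasurableSet A := measurableSet_lt measurable_const hf
  have hB : MeasurableSet B := measurableSet_lt measurable_const hg
  have hA₀ : A.Nonempty := lt_iSup_iff.1 (hfs.symm ▸ hs :)
  have hB₀ : B.Nonempty := lt_iSup_iff.1 (hgs.symm ▸ hs :)
  have hAB : (1 - t) • A + t • B ⊆ {z | ENNReal.ofReal s < h z} := by
    rintro _ ⟨_, ⟨x, hx, rfl⟩, _, ⟨y, hy, rfl⟩, rfl⟩
    calc ENNReal.ofReal s = ENNReal.ofReal s ^ (1 - t) * ENNReal.ofReal s ^ t := by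
          rw [← ENNReal.rpow_add _ _ (ENNReal.ofReal_pos.2 hs₀).ne' ENNReal.ofReal_ne_top]
          simp
      _ < f x ^ (1 - t) * g y ^ t :=
          ENNReal.mul_lt_mul (ENNReal.rpow_lt_rpow hx h1t) (ENNReal.rpow_lt_rpow hy ht₀)
      _ ≤ h ((1 - t) * x + t * y) := hfgh x y
  have hvol : ∀ {r : ℝ}, 0 ≤ r → ∀ S : Set ℝ, volume (r • S) = ENNReal.ofReal r * volume S :=
    fun hr S => by simp [Measure.addHaar_smul_of_nonneg volume hr]
  rw [← hvol h1t.le, ← hvol ht₀.le]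
  exact Real.volume_add_volume_le_of_add_subset (hA.const_smul_of_ne_zero h1t.ne')
    (hB.const_smul_of_ne_zero ht₀.ne') hA₀.smul_set hB₀.smul_set hAB

theorem Real.weighted_lintegral_le_of_iSup_eq_one {t : ℝ} (ht₀ : 0 < t) (ht₁ : t < 1)
    {f g h : ℝ → ℝ≥0∞} (hf : Measurable f) (hg : Measurable g) (hh : Measurable h)
    (hfs : ⨆ x, f x = 1) (hgs : ⨆ x, g x = 1)
    (hfgh : ∀ x y, f x ^ (1 - t) * g y ^ t ≤ h ((1 - t) * x + t * y)) :
    ENNReal.ofReal (1 - t) * (∫⁻ x, f x) + ENNReal.ofReal t * (∫⁻ x, g x) ≤ ∫⁻ x, h x := by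
  have hf_le : ∀ x, f x ≤ 1 := fun x => hfs ▸ le_iSup f x
  have hg_le : ∀ x, g x ≤ 1 := fun x => hgs ▸ le_iSup g x
  have h_top : ∀ {φ : ℝ → ℝ≥0∞}, (∀ x, φ x ≤ 1) → ∀ x, φ x ≠ ⊤ :=
    fun hφ x => ((hφ x).trans_lt ENNReal.one_lt_top).ne
  have hmeas_level : ∀ φ : ℝ → ℝ≥0∞,
      Measurable fun s : ℝ => volume {x | ENNReal.ofReal s < φ x} :=
    fun φ => Antitone.measurable fun s s' hss' =>
      measure_mono fun x hx => (ENNReal.ofReal_le_ofReal hss').trans_lt hx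
  -- the levels `s ≥ 1` contribute nothing on the left, and `min h 1` has the same levels below 1
  have hlevel : ∀ s ∈ Ioi (0 : ℝ),
      ENNReal.ofReal (1 - t) * volume {x | ENNReal.ofReal s < f x} +
        ENNReal.ofReal t * volume {y | ENNReal.ofReal s < g y} ≤
        volume {z | ENNReal.ofReal s < min (h z) 1} := by
    intro s hs₀
    rcases lt_or_ge s 1 with hs₁ | hs₁
    · have hmin : {z | ENNReal.ofReal s < min (h z) 1} = {z | ENNReal.ofReal s < h z} := by
        ext z
        simp [ENNReal.ofReal_lt_one.2 hs₁]
      rw [hmin]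
      exact Real.weighted_volume_superlevel_le_of_iSup_eq_one ht₀ ht₁ hf hg hfs hgs hfgh hs₀ hs₁
    · have hempty : ∀ {φ : ℝ → ℝ≥0∞}, (∀ x, φ x ≤ 1) → {x | ENNReal.ofReal s < φ x} = ∅ :=
        fun hφ => eq_empty_of_forall_notMem fun x hx =>
          (hx.trans_le (hφ x)).not_ge (ENNReal.one_le_ofReal.2 hs₁)
      simp [hempty hf_le, hempty hg_le]
  calc ENNReal.ofReal (1 - t) * (∫⁻ x, f x) + ENNReal.ofReal t * (∫⁻ x, g x)
      = ∫⁻ s in Ioi 0, (ENNReal.ofReal (1 - t) * volume {x | ENNReal.ofReal s < f x} +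
          ENNReal.ofReal t * volume {y | ENNReal.ofReal s < g y}) := by
        rw [lintegral_eq_lintegral_meas_ofReal_lt volume hf (h_top hf_le),
          lintegral_eq_lintegral_meas_ofReal_lt volume hg (h_top hg_le),
          lintegral_add_left ((hmeas_level f).const_mul _), lintegral_const_mul _ (hmeas_level f),
          lintegral_const_mul _ (hmeas_level g)]
    _ ≤ ∫⁻ s in Ioi 0, volume {z | ENNReal.ofReal s < min (h z) 1} :=
        setLIntegral_mono' measurableSet_Ioi hlevel
    _ = ∫⁻ z, min (h z) 1 :=
        (lintegral_eq_lintegral_meas_ofReal_lt volume (hh.min measurable_const)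
          (h_top fun _ => min_le_right _ _)).symm
    _ ≤ ∫⁻ z, h z := lintegral_mono fun _ => min_le_left _ _

theorem Real.lintegral_rpow_mul_lintegral_rpow_le_of_iSup_ne_top {t : ℝ} (ht₀ : 0 < t)
    (ht₁ : t < 1) {f g h : ℝ → ℝ≥0∞} (hf : Measurable f) (hg : Measurable g) (hh : Measurable h)
    (hfs : ⨆ x, f x ≠ ⊤) (hgs : ⨆ x, g x ≠ ⊤)
    (hfgh : ∀ x y, f x ^ (1 - t) * g y ^ t ≤ h ((1 - t) * x + t * y)) :
    (∫⁻ x, f x) ^ (1 - t) * (∫⁻ x, g x) ^ t ≤ ∫⁻ x, h x := by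
  have h1t : 0 < 1 - t := by linarith
  set M := ⨆ x, f x
  set N := ⨆ x, g x
  rcases eq_or_ne M 0 with hM₀ | hM₀
  · simp [ENNReal.iSup_eq_zero.1 hM₀, ENNReal.zero_rpow_of_pos h1t]
  rcases eq_or_ne N 0 with hN₀ | hN₀
  · simp [ENNReal.iSup_eq_zero.1 hN₀, ENNReal.zero_rpow_of_pos ht₀]
  set K := M ^ (1 - t) * N ^ t
  have hK₀ : K ≠ 0 := mul_ne_zero (ENNReal.rpow_pos (pos_iff_ne_zero.2 hM₀) hfs).ne'
    (ENNReal.rpow_pos (pos_iff_ne_zero.2 hN₀) hgs).ne'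
  have hK_top : K ≠ ⊤ := ENNReal.mul_ne_top (ENNReal.rpow_ne_top_of_nonneg h1t.le hfs)
    (ENNReal.rpow_ne_top_of_nonneg ht₀.le hgs)
  have hscale : ∀ a b : ℝ≥0∞, (a / M) ^ (1 - t) * (b / N) ^ t = a ^ (1 - t) * b ^ t / K := by
    intro a b
    rw [ENNReal.div_rpow_of_nonneg _ _ h1t.le, ENNReal.div_rpow_of_nonneg _ _ ht₀.le,
      div_eq_mul_inv, div_eq_mul_inv, div_eq_mul_inv, ENNReal.mul_inv (.inr ?_) (.inr ?_)]
    · ring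
    · exact ENNReal.rpow_ne_top_of_nonneg ht₀.le hgs
    · exact (ENNReal.rpow_pos (pos_iff_ne_zero.2 hN₀) hgs).ne'
  have hint : ∀ {φ : ℝ → ℝ≥0∞}, Measurable φ → ∀ c, ∫⁻ x, φ x / c = (∫⁻ x, φ x) / c := by
    intro φ hφ c
    simp_rw [div_eq_mul_inv]
    exact lintegral_mul_const _ hφ
  have hnormalized := Real.weighted_lintegral_le_of_iSup_eq_one ht₀ ht₁ (hf.div_const M)
    (hg.div_const N) (hh.div_const K) (by rw [← ENNReal.iSup_div, ENNReal.div_self hM₀ hfs])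
    (by rw [← ENNReal.iSup_div, ENNReal.div_self hN₀ hgs])
    (fun x y => (hscale _ _).trans_le (ENNReal.div_le_div_right (hfgh x y) K))
  rw [hint hf, hint hg, hint hh] at hnormalized
  calc (∫⁻ x, f x) ^ (1 - t) * (∫⁻ x, g x) ^ t
      = ((∫⁻ x, f x) / M) ^ (1 - t) * ((∫⁻ x, g x) / N) ^ t * K := by
        rw [hscale, ENNReal.div_mul_cancel hK₀ hK_top]
    _ ≤ (ENNReal.ofReal (1 - t) * ((∫⁻ x, f x) / M) +
          ENNReal.ofReal t * ((∫⁻ x, g x) / N)) * K := by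
        gcongr
        exact ENNReal.rpow_mul_rpow_le_add ht₀ ht₁ _ _
    _ ≤ (∫⁻ x, h x) / K * K := by gcongr
    _ = ∫⁻ x, h x := ENNReal.div_mul_cancel hK₀ hK_top

def HasPrekopaLeindler (E : Type*) [MeasureSpace E] [AddCommGroup E] [Module ℝ E] : Prop :=
  ∀ t : ℝ, 0 < t → t < 1 → ∀ f g h : E → ℝ≥0∞, Measurable f → Measurable g → Measurable h →
    (∀ x y, f x ^ (1 - t) * g y ^ t ≤ h ((1 - t) • x + t • y)) →
    (∫⁻ x, f x) ^ (1 - t) * (∫⁻ x, g x) ^ t ≤ ∫⁻ x, h x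

namespace HasPrekopaLeindler

variable {α β : Type*} [MeasureSpace α] [AddCommGroup α] [Module ℝ α]
  [MeasureSpace β] [AddCommGroup β] [Module ℝ β]

theorem real : HasPrekopaLeindler ℝ := by
  intro t ht₀ ht₁ f g h hf hg hh hfgh
  have h1t : 0 < 1 - t := by linarith
  have htrunc : ∀ n : ℕ,
      (∫⁻ x, min (f x) n) ^ (1 - t) * (∫⁻ x, min (g x) n) ^ t ≤ ∫⁻ x, h x := fun n =>
    Real.lintegral_rpow_mul_lintegral_rpow_le_of_iSup_ne_top ht₀ ht₁
      (hf.min measurable_const) (hg.min measurable_const) hh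
      (ne_top_of_le_ne_top (ENNReal.natCast_ne_top n) (iSup_le fun _ => min_le_right _ _))
      (ne_top_of_le_ne_top (ENNReal.natCast_ne_top n) (iSup_le fun _ => min_le_right _ _))
      fun x y => le_trans (by gcongr <;> exact min_le_left _ _) (hfgh x y)
  have hmono : ∀ φ : ℝ → ℝ≥0∞, Monotone fun n : ℕ => ∫⁻ x, min (φ x) n :=
    fun φ m n hmn => lintegral_mono fun x => min_le_min_left _ (Nat.cast_le.2 hmn)
  have hrpow : ∀ {φ : ℝ → ℝ≥0∞}, Measurable φ → ∀ {p : ℝ}, 0 < p →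
      (∫⁻ x, φ x) ^ p = ⨆ n : ℕ, (∫⁻ x, min (φ x) n) ^ p := fun hφ p hp => by
    rw [lintegral_eq_iSup_lintegral_min_natCast volume hφ]
    exact (ENNReal.monotone_rpow_of_nonneg hp.le).map_iSup_of_continuousAt
      ENNReal.continuous_rpow_const.continuousAt (ENNReal.zero_rpow_of_pos hp)
  rw [hrpow hf h1t, hrpow hg ht₀, ENNReal.iSup_mul]
  refine iSup_le fun m => ?_
  rw [ENNReal.mul_iSup]
  exact iSup_le fun n => (htrunc (max m n)).trans' <|
    mul_le_mul' (ENNReal.rpow_le_rpow (hmono f (le_max_left m n)) h1t.le)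
      (ENNReal.rpow_le_rpow (hmono g (le_max_right m n)) ht₀.le)

theorem prod [SFinite (volume : Measure β)] (hα : HasPrekopaLeindler α)
    (hβ : HasPrekopaLeindler β) : HasPrekopaLeindler (α × β) := by
  intro t ht₀ ht₁ f g h hf hg hh hfgh
  simp only [Measure.volume_eq_prod, lintegral_prod _ hf.aemeasurable,
    lintegral_prod _ hg.aemeasurable, lintegral_prod _ hh.aemeasurable]
  refine hα t ht₀ ht₁ _ _ _ hf.lintegral_prod_right' hg.lintegral_prod_right'
    hh.lintegral_prod_right' fun x₁ x₂ => ?_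
  refine hβ t ht₀ ht₁ _ _ _ (hf.comp measurable_prodMk_left) (hg.comp measurable_prodMk_left)
    (hh.comp measurable_prodMk_left) fun y₁ y₂ => ?_
  simpa using hfgh (x₁, y₁) (x₂, y₂)

theorem of_measurePreserving {φ : β → α} (hφ : MeasurePreserving φ volume volume)
    (hφ_lin : IsLinearMap ℝ φ) (hβ : HasPrekopaLeindler β) : HasPrekopaLeindler α := by
  intro t ht₀ ht₁ f g h hf hg hh hfgh
  rw [← hφ.lintegral_comp hf, ← hφ.lintegral_comp hg, ← hφ.lintegral_comp hh]
  refine hβ t ht₀ ht₁ _ _ _ (hf.comp hφ.measurable) (hg.comp hφ.measurable)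
    (hh.comp hφ.measurable) fun x y => ?_
  simpa [hφ_lin.map_add, hφ_lin.map_smul] using hfgh (φ x) (φ y)

theorem pi_fin : ∀ n : ℕ, HasPrekopaLeindler (Fin n → ℝ)
  | 0 => by
    intro t _ _ f g h hf hg hh hfgh
    rw [volume_pi, Measure.pi_of_empty _ 0, lintegral_dirac' _ hf, lintegral_dirac' _ hg,
      lintegral_dirac' _ hh]
    simpa using hfgh 0 0
  | n + 1 =>
    of_measurePreserving (volume_preserving_piFinSuccAbove (fun _ => ℝ) 0).symm
      (by constructor <;> intros <;> ext i <;> refine Fin.cases ?_ (fun _ => ?_) i <;>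
        simp [MeasurableEquiv.piFinSuccAbove_symm_apply])
      (real.prod (pi_fin n))

theorem pi (ι : Type*) [Fintype ι] : HasPrekopaLeindler (ι → ℝ) :=
  of_measurePreserving (volume_measurePreserving_piCongrLeft (fun _ => ℝ)
      (Fintype.equivFin ι).symm)
    (by constructor <;> intros <;> ext <;>
      simp [MeasurableEquiv.coe_piCongrLeft, Equiv.piCongrLeft_apply_eq_cast])
    (pi_fin _)

theorem euclideanSpace (ι : Type*) [Fintype ι] : HasPrekopaLeindler (EuclideanSpace ℝ ι) :=
  of_measurePreserving (PiLp.volume_preserving_toLp ι) ⟨fun _ _ => rfl, fun _ _ => rfl⟩ (pi ι)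

end HasPrekopaLeindler

theorem IsLogConcaveFn.ofReal_rpow_mul_rpow_le {E : Type*} [AddCommGroup E] [Module ℝ E]
    {f : E → ℝ} (hf : IsLogConcaveFn f) (x y : E) {t : ℝ} (ht : t ∈ Icc (0 : ℝ) 1) :
    ENNReal.ofReal (f x) ^ (1 - t) * ENNReal.ofReal (f y) ^ t ≤
      ENNReal.ofReal (f ((1 - t) • x + t • y)) := by
  rw [ENNReal.ofReal_rpow_of_nonneg (hf.1 x) (by linarith [ht.2]),
    ENNReal.ofReal_rpow_of_nonneg (hf.1 y) ht.1, ← ENNReal.ofReal_mul (by positivity [hf.1 x])]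
  exact ENNReal.ofReal_le_ofReal (hf.2 x y t ht)

/-- **Prékopa's theorem**: marginals of log-concave functions are log-concave.  The
marginal `x ↦ ∫ f(x, y) dy` takes values in `[0, ∞]`, and its log-concavity is expressed
multiplicatively with `ℝ≥0∞`-valued powers. -/
theorem statement2 (d₁ d₂ : ℕ) (f : Rd d₁ × Rd d₂ → ℝ)
    (hmeas : Measurable f) (hlc : IsLogConcaveFn f) :
    ∀ x y : Rd d₁, ∀ t : ℝ, t ∈ Set.Icc (0:ℝ) 1 →
      (∫⁻ z, ENNReal.ofReal (f (x, z))) ^ (1 - t) *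
        (∫⁻ z, ENNReal.ofReal (f (y, z))) ^ t
        ≤ ∫⁻ z, ENNReal.ofReal (f ((1 - t) • x + t • y, z)) := by
  intro x y t ht
  rcases ht.1.eq_or_lt with rfl | ht₀
  · simp
  rcases ht.2.eq_or_lt with rfl | ht₁
  · simp
  have hslice : ∀ w : Rd d₁, Measurable fun z : Rd d₂ => ENNReal.ofReal (f (w, z)) := fun w =>
    ENNReal.measurable_ofReal.comp (hmeas.comp measurable_prodMk_left)
  exact HasPrekopaLeindler.euclideanSpace (Fin d₂) t ht₀ ht₁ _ _ _ (hslice x) (hslice y)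
    (hslice _) fun z w => hlc.ofReal_rpow_mul_rpow_le (x, z) (y, w) ht
end
end

section
/- Let Φ denote the class of upper semi-continuous, concave functions φ : ℝ^d → [-∞, ∞) with φ(x) → -∞ as ‖x‖ → ∞, and for a probability measure P on ℝ^d let L(φ, P) := ∫_{ℝ^d} φ dP − ∫_{ℝ^d} e^φ dx and L*(P) := sup_{φ ∈ Φ} L(φ, P). Then: (i) if ∫_{ℝ^d} ‖x‖ dP(x) = ∞, then L*(P) = −∞; (ii) if ∫_{ℝ^d} ‖x‖ dP(x) < ∞ but P(H) = 1 for some hyperplane H ⊆ ℝ^d (an affine subspace of dimension d − 1), then L*(P) = ∞. -/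
open MeasureTheory Filter Set
open scoped ENNReal Topology

noncomputable section

/-!
(i) A function `φ ∈ Φ` decays at least linearly: pick `x₀` with `φ x₀ = m` finite and `R` with
`φ ≤ m - 1` outside the ball of radius `R`; concavity on the segment from `x₀` to a far point `x`
then gives `φ x ≤ m - ‖x - x₀‖ / (R + ‖x₀‖)`. Hence `∫ φ⁻ dP ≥ ∫ (b‖x‖ - A)⁺ dP = ∞` and every
`L(φ, P)` is `-∞`.

(ii) If `P` lives on the hyperplane `l = c`, test with `φ = a - ‖x‖ - n |l x - c|`. Then
`∫ φ dP = a - ∫ ‖x‖ dP`, while `∫ e^φ = e^a ∫ e^(-‖x‖ - n |l x - c|) → 0` as `n → ∞` by dominated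
convergence, the hyperplane being Lebesgue-null. Letting `a → ∞` gives `L* = ∞`.
-/

@[simp] lemma epos_coe (r : ℝ) : epos (r : EReal) = ENNReal.ofReal r := by
  simp [epos]

@[simp] lemma expE_coe (r : ℝ) : expE (r : EReal) = ENNReal.ofReal (Real.exp r) := by
  simp [expE]

lemma ofReal_neg_le_epos_neg {a : EReal} {r : ℝ} (h : a ≤ r) :
    ENNReal.ofReal (-r) ≤ epos (-a) := by
  induction a using EReal.rec with
  | bot => simp [epos]
  | coe x =>
      rw [← EReal.coe_neg, epos_coe]
      exact ENNReal.ofReal_le_ofReal (neg_le_neg (EReal.coe_le_coe_iff.1 h))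
  | top => simp at h

section erealIntegral

variable {α : Type*} [MeasurableSpace α] {P : Measure α}

lemma erealIntegral_eq_bot {φ : α → EReal} (h : ∫⁻ x, epos (-φ x) ∂P = ⊤) :
    erealIntegral P φ = ⊥ := by
  rw [erealIntegral, h, EReal.coe_ennreal_top, EReal.sub_top]

lemma erealIntegral_congr_ae {φ ψ : α → EReal} (h : φ =ᵐ[P] ψ) :
    erealIntegral P φ = erealIntegral P ψ := by
  unfold erealIntegral
  congr 2 <;> exact lintegral_congr_ae (h.mono fun x hx => by simp only [hx])

lemma erealIntegral_coe {f : α → ℝ} (hf : Integrable f P) :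
    erealIntegral P (fun x => (f x : EReal)) = ((∫ x, f x ∂P : ℝ) : EReal) := by
  simp only [erealIntegral, ← EReal.coe_neg, epos_coe]
  rw [integral_eq_lintegral_pos_part_sub_lintegral_neg_part hf, EReal.coe_sub,
    EReal.coe_ennreal_toReal, EReal.coe_ennreal_toReal]
  · exact hf.neg.lintegral_lt_top.ne
  · exact hf.lintegral_lt_top.ne

end erealIntegral

section Phi

variable {E : Type*} [NormedAddCommGroup E] [NormedSpace ℝ E] {φ : E → EReal}

lemma MemPhi.le_sub_div_of_le_norm_sub (hφ : MemPhi φ) {x₀ : E} {m R : ℝ} (hR : 0 < R)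
    (hx₀ : φ x₀ = m) (hfar : ∀ y, R ≤ ‖y‖ → φ y ≤ ((m - 1 : ℝ) : EReal)) {x : E}
    (hx : R + ‖x₀‖ ≤ ‖x - x₀‖) : φ x ≤ ((m - ‖x - x₀‖ / (R + ‖x₀‖) : ℝ) : EReal) := by
  set ρ := R + ‖x₀‖
  have hρ : 0 < ρ := by positivity
  have hd : 0 < ‖x - x₀‖ := hρ.trans_le hx
  set t := ρ / ‖x - x₀‖
  have ht : 0 < t := by positivity
  have ht1 : t ≤ 1 := (div_le_one hd).2 hx
  have htd : t * ‖x - x₀‖ = ρ := div_mul_cancel₀ _ hd.ne'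
  have hu : R ≤ ‖(1 - t) • x₀ + t • x‖ := by
    have h : (1 - t) • x₀ + t • x = t • (x - x₀) + x₀ := by rw [smul_sub]; module
    have h₁ := norm_sub_le (t • (x - x₀) + x₀) x₀
    rw [add_sub_cancel_right, norm_smul, Real.norm_of_nonneg ht.le, htd] at h₁
    rw [h]; linarith
  have hconc := (hφ.2.2.1 x₀ x t ⟨ht.le, ht1⟩).trans (hfar _ hu)
  induction hφx : φ x using EReal.rec with
  | bot => exact bot_le
  | top => exact absurd hφx (hφ.1 x)
  | coe y =>
      rw [hx₀, hφx, ← EReal.coe_mul, ← EReal.coe_mul, ← EReal.coe_add,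
        EReal.coe_le_coe_iff] at hconc
      refine EReal.coe_le_coe_iff.2 (le_of_mul_le_mul_left ?_ ht)
      have : t * (m - ‖x - x₀‖ / ρ) = t * m - 1 := by
        rw [mul_sub, mul_div_assoc', htd, div_self hρ.ne']
      linarith

lemma MemPhi.exists_ofReal_le_epos_neg (hφ : MemPhi φ) :
    ∃ b A : ℝ, 0 < b ∧ ∀ x, ENNReal.ofReal (b * ‖x‖ - A) ≤ epos (-φ x) := by
  by_cases hbot : ∀ x, φ x = ⊥
  · exact ⟨1, 0, one_pos, fun x => by simp [hbot x, epos]⟩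
  push Not at hbot
  obtain ⟨x₀, hx₀⟩ := hbot
  set m := (φ x₀).toReal
  have hm : φ x₀ = m := (EReal.coe_toReal (hφ.1 x₀) hx₀).symm
  obtain ⟨R, hR, hfar⟩ : ∃ R > 0, ∀ y, R ≤ ‖y‖ → φ y ≤ ((m - 1 : ℝ) : EReal) := by
    have h := hφ.2.2.2.eventually (Iic_mem_nhds (EReal.bot_lt_coe (m - 1)))
    obtain ⟨R, hR⟩ := eventually_atTop.1 (eventually_comap.1 h)
    exact ⟨max R 1, by positivity, fun y hy => hR _ ((le_max_left _ _).trans hy) y rfl⟩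
  set ρ := R + ‖x₀‖
  have hρ : 0 < ρ := by positivity
  refine ⟨ρ⁻¹, |m| + 1 + ‖x₀‖ / ρ, inv_pos.2 hρ, fun x => ?_⟩
  have hx : ‖x‖ ≤ ‖x - x₀‖ + ‖x₀‖ := norm_le_norm_sub_add x x₀
  rw [inv_mul_eq_div]
  rcases le_or_gt ρ ‖x - x₀‖ with hxfar | hxnear
  · refine le_trans (ENNReal.ofReal_le_ofReal ?_)
      (ofReal_neg_le_epos_neg (hφ.le_sub_div_of_le_norm_sub hR hm hfar hxfar))
    have : ‖x‖ / ρ ≤ ‖x - x₀‖ / ρ + ‖x₀‖ / ρ := by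
      rw [← add_div]; exact div_le_div_of_nonneg_right hx hρ.le
    linarith [le_abs_self m]
  · rw [ENNReal.ofReal_eq_zero.2]
    · exact bot_le
    have : ‖x‖ / ρ ≤ 1 + ‖x₀‖ / ρ := by
      rw [div_le_iff₀ hρ, add_mul, div_mul_cancel₀ _ hρ.ne']; linarith
    linarith [abs_nonneg m]

end Phi

lemma lintegral_ofReal_sub_eq_top {α : Type*} [MeasurableSpace α] {μ : Measure α}
    [IsFiniteMeasure μ] {f : α → ℝ} (hf : ∫⁻ x, ENNReal.ofReal (f x) ∂μ = ⊤) (A : ℝ) :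
    ∫⁻ x, ENNReal.ofReal (f x - A) ∂μ = ⊤ := by
  have h : ∫⁻ x, ENNReal.ofReal (f x) ∂μ ≤
      ∫⁻ x, ENNReal.ofReal (f x - A) ∂μ + ENNReal.ofReal A * μ univ := by
    rw [← lintegral_const, ← lintegral_add_right _ measurable_const]
    refine lintegral_mono fun x => ?_
    simpa using ENNReal.ofReal_add_le (p := f x - A) (q := A)
  rw [hf, top_le_iff, ENNReal.add_eq_top] at h
  exact h.resolve_right (ENNReal.mul_ne_top ENNReal.ofReal_ne_top (measure_ne_top μ univ))

theorem lstar_eq_bot_of_lintegral_enorm_eq_top {E : Type*} [NormedAddCommGroup E]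
    [NormedSpace ℝ E] [MeasureSpace E] (P : Measure E) [IsFiniteMeasure P]
    (hP : ∫⁻ x, ‖x‖ₑ ∂P = ⊤) : Lstar P = ⊥ := by
  refine iSup₂_eq_bot.2 fun φ hφ => ?_
  obtain ⟨b, A, hb, hφb⟩ := hφ.exists_ofReal_le_epos_neg
  have hbP : ∫⁻ x, ENNReal.ofReal (b * ‖x‖) ∂P = ⊤ := by
    simp_rw [ENNReal.ofReal_mul hb.le, ofReal_norm]
    rw [lintegral_const_mul' _ _ ENNReal.ofReal_ne_top, hP,
      ENNReal.mul_top (ENNReal.ofReal_pos.2 hb).ne']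
  have hneg : ∫⁻ x, epos (-φ x) ∂P = ⊤ :=
    top_unique ((lintegral_ofReal_sub_eq_top hbP A).ge.trans (lintegral_mono hφb))
  rw [Lfun, erealIntegral_eq_bot hneg, EReal.bot_sub]

section Hyperplane

variable {E : Type*} [NormedAddCommGroup E]

lemma integrable_exp_neg_norm [MeasurableSpace E] [BorelSpace E] [SecondCountableTopology E]
    (μ : Measure E) [μ.HasTemperateGrowth] : Integrable (fun x => Real.exp (-‖x‖)) μ := by
  have h := integrable_of_le_of_pow_mul_le (μ := μ) (k := 0) (f := fun x : E => Real.exp (-‖x‖))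
    (C₁ := 1) (C₂ := Nat.factorial μ.integrablePower) (fun x => ?_) (fun x => ?_)
    (by fun_prop)
  · simpa [Real.norm_of_nonneg (Real.exp_pos _).le] using h
  · rw [Real.norm_of_nonneg (Real.exp_pos _).le, Real.exp_le_one_iff, neg_nonpos]
    exact norm_nonneg x
  · have := Real.pow_div_factorial_le_exp ‖x‖ (norm_nonneg x) μ.integrablePower
    rw [zero_add, Real.norm_of_nonneg (Real.exp_pos _).le, Real.exp_neg, ← div_eq_mul_inv,
      div_le_iff₀ (Real.exp_pos _)]
    rwa [div_le_iff₀ (by positivity), mul_comm] at this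

lemma addHaar_setOf_eq_eq_zero [NormedSpace ℝ E] [MeasurableSpace E] [BorelSpace E]
    [FiniteDimensional ℝ E] (μ : Measure E) [μ.IsAddHaarMeasure] {l : E →ₗ[ℝ] ℝ} (hl : l ≠ 0)
    (c : ℝ) : μ {x | l x = c} = 0 := by
  obtain ⟨x₀, rfl⟩ := LinearMap.surjective_of_ne_zero hl c
  have : {x | l x = l x₀} = (· + -x₀) ⁻¹' (LinearMap.ker l : Set E) := by
    ext x
    simp [← sub_eq_add_neg, sub_eq_zero]
  rw [this, measure_preimage_add_right]
  exact Measure.addHaar_submodule μ _ (by rwa [Ne, LinearMap.ker_eq_top])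

lemma tendsto_lintegral_exp_neg_norm_sub_mul_abs [MeasurableSpace E] [BorelSpace E]
    [SecondCountableTopology E] (μ : Measure E) [μ.HasTemperateGrowth] {g : E → ℝ}
    (hg : Measurable g) (hg₀ : μ {x | g x = 0} = 0) :
    Tendsto (fun n : ℕ => ∫⁻ x, ENNReal.ofReal (Real.exp (-‖x‖ - n * |g x|)) ∂μ)
      atTop (𝓝 0) := by
  have hlim : ∀ᵐ x ∂μ, Tendsto (fun n : ℕ => ENNReal.ofReal (Real.exp (-‖x‖ - n * |g x|)))
      atTop (𝓝 0) := by
    refine (measure_eq_zero_iff_ae_notMem.1 hg₀).mono fun x hx => ?_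
    have h : Tendsto (fun n : ℕ => -‖x‖ - n * |g x|) atTop atBot :=
      tendsto_atBot_add_const_left _ _ (tendsto_neg_atTop_atBot.comp
        (tendsto_natCast_atTop_atTop.atTop_mul_const (abs_pos.2 hx)))
    simpa using ENNReal.tendsto_ofReal (Real.tendsto_exp_atBot.comp h)
  simpa using tendsto_lintegral_of_dominated_convergence _ (fun n => by fun_prop)
    (fun n => ae_of_all _ fun x => ENNReal.ofReal_le_ofReal (Real.exp_le_exp.2
      (by nlinarith [abs_nonneg (g x), (n.cast_nonneg : (0 : ℝ) ≤ n)])))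
    (integrable_exp_neg_norm μ).lintegral_lt_top.ne hlim

lemma memPhi_coe_of_concaveOn [NormedSpace ℝ E] {g : E → ℝ} (hc : Continuous g)
    (hg : ConcaveOn ℝ univ g) (ht : Tendsto g (comap (fun x => ‖x‖) atTop) atBot) :
    MemPhi (fun x => (g x : EReal)) := by
  refine ⟨fun x => EReal.coe_ne_top _, (continuous_coe_real_ereal.comp hc).upperSemicontinuous,
    fun x y t ht => ?_, EReal.tendsto_coe_atBot.comp ht⟩
  rw [← EReal.coe_mul, ← EReal.coe_mul, ← EReal.coe_add, EReal.coe_le_coe_iff]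
  exact hg.2 (mem_univ x) (mem_univ y) (by linarith [ht.2]) ht.1 (by ring)

lemma memPhi_sub_norm_sub_mul_abs [NormedSpace ℝ E] [FiniteDimensional ℝ E] (l : E →ₗ[ℝ] ℝ)
    (a c : ℝ) (n : ℕ) :
    MemPhi (fun x : E => ((a - ‖x‖ - n * |l x - c| : ℝ) : EReal)) := by
  have hconv : ConvexOn ℝ univ (fun x => |l x - c|) := by
    simpa [Function.comp_def] using (convexOn_univ_norm (E := ℝ)).comp_affineMap
      (l.toAffineMap - AffineMap.const ℝ E c)
  refine memPhi_coe_of_concaveOn (by fun_prop) ?_ ?_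
  · exact ((concaveOn_const a convex_univ).sub convexOn_univ_norm).sub
      (hconv.smul n.cast_nonneg)
  · refine tendsto_atBot_mono (fun x => ?_)
      (tendsto_atBot_add_const_left _ a (tendsto_neg_atTop_atBot.comp tendsto_comap))
    have : 0 ≤ (n : ℝ) * |l x - c| := by positivity
    simp only [Function.comp_apply]
    linarith

end Hyperplane

theorem lstar_eq_top_of_ae_eq {E : Type*} [NormedAddCommGroup E] [NormedSpace ℝ E]
    [FiniteDimensional ℝ E] [MeasureSpace E] [BorelSpace E]
    [(volume : Measure E).IsAddHaarMeasure] (P : Measure E) [IsProbabilityMeasure P]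
    (hP : Integrable (fun x => ‖x‖) P)
    {l : E →ₗ[ℝ] ℝ} (hl : l ≠ 0) {c : ℝ} (hc : ∀ᵐ x ∂P, l x = c) : Lstar P = ⊤ := by
  refine (EReal.eq_top_iff_forall_lt _).2 fun K => ?_
  set M := ∫ x, ‖x‖ ∂P
  set a := K + M + 2
  have hnull : volume {x : E | l x - c = 0} = 0 := by
    simpa [sub_eq_zero] using addHaar_setOf_eq_eq_zero volume hl c
  obtain ⟨n, hn⟩ := ((tendsto_lintegral_exp_neg_norm_sub_mul_abs volume (by fun_prop)
    hnull).eventually_lt_const (ENNReal.ofReal_pos.2 (Real.exp_pos (-a)))).exists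
  set φ : E → EReal := fun x => ((a - ‖x‖ - n * |l x - c| : ℝ) : EReal)
  have hint : erealIntegral P φ = ((a - M : ℝ) : EReal) := by
    rw [erealIntegral_congr_ae (ψ := fun x => ((a - ‖x‖ : ℝ) : EReal))
      (hc.mono fun x hx => by simp [φ, hx]),
      erealIntegral_coe (f := fun x => a - ‖x‖) ((integrable_const a).sub hP),
      integral_sub (integrable_const a) hP, integral_const, probReal_univ, one_smul]
  have hexp : ∫⁻ x, expE (φ x) ≤ 1 := by
    have h : ∀ x, expE (φ x) =
        ENNReal.ofReal (Real.exp a) * ENNReal.ofReal (Real.exp (-‖x‖ - n * |l x - c|)) := by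
      intro x
      rw [expE_coe, ← ENNReal.ofReal_mul (Real.exp_pos a).le, ← Real.exp_add]
      ring_nf
    calc ∫⁻ x, expE (φ x)
        = ENNReal.ofReal (Real.exp a) *
            ∫⁻ x, ENNReal.ofReal (Real.exp (-‖x‖ - n * |l x - c|)) := by
          rw [lintegral_congr h, lintegral_const_mul' _ _ ENNReal.ofReal_ne_top]
      _ ≤ ENNReal.ofReal (Real.exp a) * ENNReal.ofReal (Real.exp (-a)) := by gcongr
      _ = 1 := by
          rw [← ENNReal.ofReal_mul (Real.exp_pos a).le, ← Real.exp_add, add_neg_cancel,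
            Real.exp_zero, ENNReal.ofReal_one]
  calc (K : EReal) < ((a - M : ℝ) : EReal) - ((1 : ℝ≥0∞) : EReal) := by
        rw [EReal.coe_ennreal_one, ← EReal.coe_one, ← EReal.coe_sub, EReal.coe_lt_coe_iff]
        linarith
    _ ≤ Lfun φ P := by
        rw [Lfun, hint]
        exact EReal.sub_le_sub le_rfl (EReal.coe_ennreal_le_coe_ennreal_iff.2 hexp)
    _ ≤ Lstar P := le_iSup₂_of_le φ (memPhi_sub_norm_sub_mul_abs l a c n) le_rfl

/-- Degenerate cases for the maximisation of `L(φ, P)` over `Φ`: (i) infinite first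
moment gives `L* = -∞`; (ii) finite first moment but concentration on a hyperplane gives
`L* = ∞`. -/
theorem statement5 (d : ℕ) (P : Measure (Rd d)) [IsProbabilityMeasure P] :
    ((∫⁻ x, (‖x‖₊ : ℝ≥0∞) ∂P) = ⊤ → Lstar P = ⊥) ∧
    ((∫⁻ x, (‖x‖₊ : ℝ≥0∞) ∂P) < ⊤ →
      ∀ (l : Rd d →ₗ[ℝ] ℝ) (c : ℝ), l ≠ 0 → P {x | l x = c} = 1 → Lstar P = ⊤) := by
  refine ⟨lstar_eq_bot_of_lintegral_enorm_eq_top P, fun hfin l c hl hc => ?_⟩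
  have hmoment : Integrable (fun x => ‖x‖) P :=
    ⟨by fun_prop, by simpa [HasFiniteIntegral, enorm_eq_nnnorm] using hfin⟩
  have hs : MeasurableSet {x : Rd d | l x = c} :=
    measurableSet_eq_fun (by fun_prop) measurable_const
  have hae : ∀ᵐ x ∂P, l x = c :=
    (ae_iff_measure_eq hs.nullMeasurableSet).2 (by rw [hc, measure_univ])
  exact lstar_eq_top_of_ae_eq P hmoment hl hae
end
end

section
/- Let P be a probability measure on ℝ^d with ∫ ‖x‖ dP(x) < ∞ and P(H) < 1 for every hyperplane H, let X ~ P, let A ∈ ℝ^{d×d} be invertible, let b ∈ ℝ^d, and let P_{A,b} denote the law of AX + b. Then the log-concave projections satisfy ψ*(P_{A,b})(x) = |det A|^{-1} ψ*(P)(A^{-1}(x − b)) for all x ∈ ℝ^d. -/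
open MeasureTheory Filter Set
open scoped ENNReal Topology

noncomputable section

/-! Pushing forward by `T x = A x + b` maps `F_d` onto itself via `f ↦ |det A|⁻¹ • f ∘ T⁻¹` and
shifts the objective `∫ log f dP` by the constant `-log |det A|`, so it carries the log-concave
projection of `P` to a maximiser for the law of `AX + b`. It remains to see that the maximiser is
unique. If `f` and `g` both maximise, the normalised geometric mean `√(f g) / c` is again a
log-concave density, with objective `∫ log f dP - log c`; hence `c = ∫ √(f g) ≥ 1`, while AM-GM
gives `c ≤ 1` with equality only if `f = g` almost everywhere. Since `P` charges no hyperplane, the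
convex set `{f > 0} ∩ {g > 0}` of full `P`-measure has nonempty interior, which makes `c > 0`.
Finally, an upper semicontinuous log-concave density is the limit of its values along segments
towards points of positivity, so almost everywhere equality is equality everywhere. -/

namespace IsLogConcaveFn

variable {E F : Type*} [AddCommGroup E] [Module ℝ E] [AddCommGroup F] [Module ℝ F] {f g : E → ℝ}

lemma const_mul (hf : IsLogConcaveFn f) {k : ℝ} (hk : 0 ≤ k) :
    IsLogConcaveFn (fun x => k * f x) := by
  refine ⟨fun x => mul_nonneg hk (hf.1 x), fun x y t ht => ?_⟩
  calc (k * f x) ^ (1 - t) * (k * f y) ^ t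
      = k ^ (1 - t + t) * (f x ^ (1 - t) * f y ^ t) := by
        rw [Real.rpow_add' hk (by norm_num), Real.mul_rpow hk (hf.1 x),
          Real.mul_rpow hk (hf.1 y)]
        ring
    _ ≤ k * f ((1 - t) • x + t • y) := by
        rw [sub_add_cancel, Real.rpow_one]
        exact mul_le_mul_of_nonneg_left (hf.2 x y t ht) hk

lemma comp_affineMap {f : F → ℝ} (hf : IsLogConcaveFn f) (T : E →ᵃ[ℝ] F) :
    IsLogConcaveFn (f ∘ T) := by
  refine ⟨fun x => hf.1 (T x), fun x y t ht => ?_⟩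
  simpa only [Function.comp_apply, ← AffineMap.lineMap_apply_module, AffineMap.apply_lineMap]
    using hf.2 (T x) (T y) t ht

lemma sqrt_mul (hf : IsLogConcaveFn f) (hg : IsLogConcaveFn g) :
    IsLogConcaveFn (fun x => √(f x * g x)) := by
  refine ⟨fun x => Real.sqrt_nonneg _, fun x y t ht => ?_⟩
  have hfg : ∀ z, 0 ≤ f z * g z := fun z => mul_nonneg (hf.1 z) (hg.1 z)
  simp only [Real.sqrt_eq_rpow]
  calc ((f x * g x) ^ (1 / 2 : ℝ)) ^ (1 - t) * ((f y * g y) ^ (1 / 2 : ℝ)) ^ t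
      = ((f x ^ (1 - t) * f y ^ t) * (g x ^ (1 - t) * g y ^ t)) ^ (1 / 2 : ℝ) := by
        rw [← Real.rpow_mul (hfg x), ← Real.rpow_mul (hfg y), mul_comm _ (1 - t),
          mul_comm _ t, Real.rpow_mul (hfg x), Real.rpow_mul (hfg y),
          ← Real.mul_rpow (Real.rpow_nonneg (hfg x) _) (Real.rpow_nonneg (hfg y) _),
          Real.mul_rpow (hf.1 x) (hg.1 x), Real.mul_rpow (hf.1 y) (hg.1 y)]
        ring_nf
    _ ≤ (f ((1 - t) • x + t • y) * g ((1 - t) • x + t • y)) ^ (1 / 2 : ℝ) := by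
        have hpow : ∀ {h : E → ℝ}, IsLogConcaveFn h → 0 ≤ h x ^ (1 - t) * h y ^ t :=
          fun hh => mul_nonneg (Real.rpow_nonneg (hh.1 x) _) (Real.rpow_nonneg (hh.1 y) _)
        exact Real.rpow_le_rpow (mul_nonneg (hpow hf) (hpow hg))
          (mul_le_mul (hf.2 x y t ht) (hg.2 x y t ht) (hpow hg) (hf.1 _)) (by norm_num)

lemma convex_setOf_pos (hf : IsLogConcaveFn f) : Convex ℝ {x | 0 < f x} := by
  intro x hx y hy a b ha hb hab
  obtain rfl : a = 1 - b := by linarith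
  exact (mul_pos (Real.rpow_pos_of_pos hx _) (Real.rpow_pos_of_pos hy _)).trans_le
    (hf.2 x y b ⟨hb, by linarith⟩)

lemma tendsto_segment [TopologicalSpace E] [IsTopologicalAddGroup E] [ContinuousSMul ℝ E]
    (hf : IsLogConcaveFn f) (husc : UpperSemicontinuous f) (x : E) {x₀ : E} (hx₀ : 0 < f x₀) :
    Tendsto (fun t : ℝ => f ((1 - t) • x + t • x₀)) (𝓝[Icc 0 1] 0) (𝓝 (f x)) := by
  have hseg : Tendsto (fun t : ℝ => (1 - t) • x + t • x₀) (𝓝[Icc 0 1] 0) (𝓝 x) := by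
    have : Continuous (fun t : ℝ => (1 - t) • x + t • x₀) := by fun_prop
    simpa using this.continuousWithinAt.tendsto (s := Icc 0 1) (x := 0)
  have hlower : Tendsto (fun t : ℝ => f x ^ (1 - t) * f x₀ ^ t) (𝓝[Icc 0 1] 0) (𝓝 (f x)) := by
    have : ContinuousAt (fun t : ℝ => f x ^ (1 - t) * f x₀ ^ t) 0 :=
      ((Real.continuousAt_const_rpow' (by norm_num)).comp (by fun_prop)).mul
        (Real.continuousAt_const_rpow hx₀.ne')
    simpa using this.tendsto.mono_left nhdsWithin_le_nhds
  refine tendsto_order.2 ⟨fun a ha => ?_, fun a ha => hseg.eventually (husc x a ha)⟩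
  filter_upwards [hlower.eventually (eventually_gt_nhds ha), self_mem_nhdsWithin] with t h ht
  exact h.trans_le (hf.2 x x₀ t ht)

end IsLogConcaveFn

section Semicontinuity

variable {α : Type*} [TopologicalSpace α] {f g : α → ℝ}

lemma UpperSemicontinuous.const_mul (hf : UpperSemicontinuous f) {c : ℝ} (hc : 0 ≤ c) :
    UpperSemicontinuous (fun x => c * f x) :=
  (continuous_const.mul continuous_id).comp_upperSemicontinuous hf
    fun _ _ h => mul_le_mul_of_nonneg_left h hc

lemma UpperSemicontinuous.mul_of_nonneg (hf : UpperSemicontinuous f) (hg : UpperSemicontinuous g)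
    (hf₀ : ∀ x, 0 ≤ f x) (hg₀ : ∀ x, 0 ≤ g x) : UpperSemicontinuous (fun x => f x * g x) := by
  intro x y hy
  have hcont : Tendsto (fun ε : ℝ => (f x + ε) * (g x + ε)) (𝓝[>] 0) (𝓝 (f x * g x)) := by
    have : Continuous (fun ε : ℝ => (f x + ε) * (g x + ε)) := by fun_prop
    simpa using (this.tendsto 0).mono_left nhdsWithin_le_nhds
  obtain ⟨ε, hεy, hε⟩ := ((hcont.eventually (eventually_lt_nhds hy)).and
    self_mem_nhdsWithin).exists
  filter_upwards [hf x _ (lt_add_of_pos_right _ hε), hg x _ (lt_add_of_pos_right _ hε)]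
    with z hfz hgz
  exact (mul_lt_mul'' hfz hgz (hf₀ z) (hg₀ z)).trans hεy

end Semicontinuity

lemma half_add_sub_sqrt_mul {a b : ℝ} (ha : 0 ≤ a) (hb : 0 ≤ b) :
    (a + b) / 2 - √(a * b) = (√a - √b) ^ 2 / 2 := by
  rw [Real.sqrt_mul ha, sub_sq, Real.sq_sqrt ha, Real.sq_sqrt hb]
  ring

namespace IsDensity

variable {E : Type*} [MeasureSpace E] {f g : E → ℝ}

lemma lintegral_sqrt_mul_add_lintegral_sq_sub (hf : IsDensity f) (hg : IsDensity g) :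
    (∫⁻ x, ENNReal.ofReal √(f x * g x)) + ∫⁻ x, ENNReal.ofReal ((√(f x) - √(g x)) ^ 2 / 2) = 1 := by
  have hfm := hf.2.1
  have hgm := hg.2.1
  have hmean : ∫⁻ x, ENNReal.ofReal ((f x + g x) / 2) = 1 := by
    simp_rw [ENNReal.ofReal_div_of_pos two_pos, ENNReal.ofReal_add (hf.1 _) (hg.1 _),
      ENNReal.div_eq_inv_mul]
    rw [lintegral_const_mul' _ _ (by simp), lintegral_add_left hfm.ennreal_ofReal, hf.2.2, hg.2.2,
      one_add_one_eq_two, ENNReal.ofReal_ofNat,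
      ENNReal.inv_mul_cancel two_ne_zero ENNReal.ofNat_ne_top]
  rw [← hmean, ← lintegral_add_left (by fun_prop)]
  refine lintegral_congr fun x => ?_
  rw [← ENNReal.ofReal_add (Real.sqrt_nonneg _) (by positivity),
    ← half_add_sub_sqrt_mul (hf.1 x) (hg.1 x), add_sub_cancel]

lemma lintegral_sqrt_mul_le_one (hf : IsDensity f) (hg : IsDensity g) :
    ∫⁻ x, ENNReal.ofReal √(f x * g x) ≤ 1 :=
  (lintegral_sqrt_mul_add_lintegral_sq_sub hf hg).le.trans' le_self_add

lemma ae_eq_of_lintegral_sqrt_mul_eq_one (hf : IsDensity f) (hg : IsDensity g)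
    (h : ∫⁻ x, ENNReal.ofReal √(f x * g x) = 1) : f =ᵐ[volume] g := by
  have hsplit := lintegral_sqrt_mul_add_lintegral_sq_sub hf hg
  rw [h] at hsplit
  have hfm := hf.2.1
  have hgm := hg.2.1
  have hzero := (lintegral_eq_zero_iff (by fun_prop)).1
    ((ENNReal.add_right_inj ENNReal.one_ne_top).1 (hsplit.trans (add_zero 1).symm))
  filter_upwards [hzero] with x hx
  have hsq : (√(f x) - √(g x)) ^ 2 / 2 ≤ 0 := ENNReal.ofReal_eq_zero.1 hx
  have hsqrt : √(f x) = √(g x) := by nlinarith [sq_nonneg (√(f x) - √(g x))]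
  rwa [Real.sqrt_inj (hf.1 x) (hg.1 x)] at hsqrt

lemma volume_setOf_pos_ne_zero (hf : IsDensity f) : volume {x | 0 < f x} ≠ 0 := by
  intro h0
  have hae : ∀ᵐ x, ENNReal.ofReal (f x) = 0 :=
    measure_mono_null (fun x hx => not_le.1 (mt ENNReal.ofReal_eq_zero.2 hx)) h0
  simpa [lintegral_congr_ae hae] using hf.2.2

end IsDensity

lemma IsLCDensity.const_mul_sqrt_mul {E : Type*} [MeasureSpace E] [TopologicalSpace E]
    [AddCommGroup E] [Module ℝ E] {f g : E → ℝ} (hf : IsLCDensity f) (hg : IsLCDensity g)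
    {c : ℝ} (hc : 0 < c) (hfg : ∫⁻ x, ENNReal.ofReal √(f x * g x) = ENNReal.ofReal c) :
    IsLCDensity (fun x => c⁻¹ * √(f x * g x)) := by
  have hc' : 0 ≤ c⁻¹ := inv_nonneg.2 hc.le
  refine ⟨⟨fun x => mul_nonneg hc' (Real.sqrt_nonneg _),
    measurable_const.mul (hf.1.2.1.mul hg.1.2.1).sqrt, ?_⟩,
    (Real.continuous_sqrt.comp_upperSemicontinuous
      (hf.2.1.mul_of_nonneg hg.2.1 hf.1.1 hg.1.1) fun _ _ => Real.sqrt_le_sqrt).const_mul hc',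
    (hf.2.2.sqrt_mul hg.2.2).const_mul hc'⟩
  simp_rw [ENNReal.ofReal_mul hc']
  rw [lintegral_const_mul' _ _ ENNReal.ofReal_ne_top, hfg, ← ENNReal.ofReal_mul hc',
    inv_mul_cancel₀ hc.ne', ENNReal.ofReal_one]

section LogIntegral

variable {α : Type*} [MeasurableSpace α] {μ : Measure α} {f : α → ℝ} {a : ℝ}

lemma log_const_mul_ae_eq (ha : 0 < a) (hf : ∀ᵐ x ∂μ, 0 < f x) :
    (fun x => Real.log (a * f x)) =ᵐ[μ] fun x => Real.log a + Real.log (f x) :=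
  hf.mono fun _ hx => Real.log_mul ha.ne' hx.ne'

lemma MeasureTheory.Integrable.log_const_mul [IsFiniteMeasure μ] (ha : 0 < a)
    (hf : ∀ᵐ x ∂μ, 0 < f x) (hlog : Integrable (fun x => Real.log (f x)) μ) :
    Integrable (fun x => Real.log (a * f x)) μ :=
  ((integrable_const _).add hlog).congr (log_const_mul_ae_eq ha hf).symm

lemma integral_log_const_mul [IsProbabilityMeasure μ] (ha : 0 < a) (hf : ∀ᵐ x ∂μ, 0 < f x)
    (hlog : Integrable (fun x => Real.log (f x)) μ) :
    ∫ x, Real.log (a * f x) ∂μ = Real.log a + ∫ x, Real.log (f x) ∂μ := by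
  rw [integral_congr_ae (log_const_mul_ae_eq ha hf), integral_add (integrable_const _) hlog,
    integral_const, probReal_univ, one_smul]

end LogIntegral

def NotConcentratedOnHyperplane {E : Type*} [AddCommGroup E] [Module ℝ E] [MeasurableSpace E]
    (Q : Measure E) : Prop :=
  ∀ (l : E →ₗ[ℝ] ℝ) (c : ℝ), l ≠ 0 → Q {x | l x = c} < 1

namespace NotConcentratedOnHyperplane

variable {E : Type*} [NormedAddCommGroup E] [NormedSpace ℝ E] [FiniteDimensional ℝ E]
  [MeasurableSpace E] {Q : Measure E}

lemma interior_nonempty [IsProbabilityMeasure Q] (hQ : NotConcentratedOnHyperplane Q) {K : Set E}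
    (hK : Convex ℝ K) (hQK : ∀ᵐ x ∂Q, x ∈ K) : (interior K).Nonempty := by
  obtain ⟨p, hp⟩ := hQK.exists
  rw [hK.interior_nonempty_iff_affineSpan_eq_top,
    AffineSubspace.affineSpan_eq_top_iff_vectorSpan_eq_top_of_nonempty ℝ _ _ ⟨p, hp⟩]
  by_contra hspan
  obtain ⟨l, hl, hker⟩ := (vectorSpan ℝ K).exists_le_ker_of_lt_top (lt_top_iff_ne_top.2 hspan)
  have hH : ∀ᵐ x ∂Q, x ∈ {x | l x = l p} := hQK.mono fun x hx => by
    simpa [sub_eq_zero] using hker (vsub_mem_vectorSpan ℝ hx hp)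
  refine (hQ l (l p) hl).ne ?_
  rw [measure_congr (ae_eq_univ (s := {x | l x = l p}).2 hH), measure_univ]

lemma map_linearEquiv_add [BorelSpace E] (hQ : NotConcentratedOnHyperplane Q) (L : E ≃ₗ[ℝ] E)
    (b : E) :
    NotConcentratedOnHyperplane (Q.map fun x => L x + b) := by
  intro l c hl
  have hT : Measurable (fun x => L x + b) :=
    ((L : E →ₗ[ℝ] E).continuous_of_finiteDimensional.add continuous_const).measurable
  rw [Measure.map_apply hT
    (isClosed_eq l.continuous_of_finiteDimensional continuous_const).measurableSet]
  have hpre : (fun x => L x + b) ⁻¹' {y | l y = c} = {x | (l ∘ₗ (L : E →ₗ[ℝ] E)) x = c - l b} := by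
    ext x
    simp [eq_sub_iff_add_eq]
  rw [hpre]
  refine hQ _ _ fun h0 => hl (LinearMap.ext fun y => ?_)
  simpa using LinearMap.congr_fun h0 (L.symm y)

end NotConcentratedOnHyperplane

section AddHaar

variable {E : Type*} [NormedAddCommGroup E] [NormedSpace ℝ E] [FiniteDimensional ℝ E]
  [MeasureSpace E] [(volume : Measure E).IsAddHaarMeasure]

lemma lintegral_comp_linearEquiv_add [BorelSpace E] (L : E ≃ₗ[ℝ] E) (b : E) {φ : E → ℝ≥0∞}
    (hφ : Measurable φ) :
    ∫⁻ x, φ (L x + b) = ENNReal.ofReal |(LinearMap.det (L : E →ₗ[ℝ] E))⁻¹| * ∫⁻ y, φ y := by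
  have hL : Continuous (L : E →ₗ[ℝ] E) := (L : E →ₗ[ℝ] E).continuous_of_finiteDimensional
  have hT : Measurable (fun x => L x + b) := (hL.add continuous_const).measurable
  have hmap : volume.map (fun x => L x + b) =
      ENNReal.ofReal |(LinearMap.det (L : E →ₗ[ℝ] E))⁻¹| • (volume : Measure E) := by
    change volume.map ((· + b) ∘ (L : E →ₗ[ℝ] E)) = _
    rw [← Measure.map_map (measurable_add_const b) hL.measurable,
      Measure.map_linearMap_addHaar_eq_smul_addHaar volume L.isUnit_det'.ne_zero,
      Measure.map_smul, map_add_right_eq_self]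
  rw [← lintegral_map hφ hT, hmap, lintegral_smul_measure, smul_eq_mul]

namespace IsLCDensity

lemma comp_linearEquiv_add [BorelSpace E] {f : E → ℝ} (hf : IsLCDensity f) (L : E ≃ₗ[ℝ] E) (b : E) :
    IsLCDensity (fun x => |LinearMap.det (L : E →ₗ[ℝ] E)| * f (L x + b)) := by
  obtain ⟨⟨hf₀, hfm, hf₁⟩, husc, hlc⟩ := hf
  set δ := |LinearMap.det (L : E →ₗ[ℝ] E)|
  have hδ : 0 < δ := abs_pos.2 L.isUnit_det'.ne_zero
  have hT : Continuous (fun x => L x + b) :=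
    (L : E →ₗ[ℝ] E).continuous_of_finiteDimensional.add continuous_const
  refine ⟨⟨fun x => mul_nonneg hδ.le (hf₀ _), measurable_const.mul (hfm.comp hT.measurable), ?_⟩,
    (husc.comp hT).const_mul hδ.le,
    (hlc.comp_affineMap ((L : E →ₗ[ℝ] E).toAffineMap + AffineMap.const ℝ E b)).const_mul hδ.le⟩
  simp_rw [ENNReal.ofReal_mul hδ.le]
  rw [lintegral_const_mul' _ _ ENNReal.ofReal_ne_top,
    lintegral_comp_linearEquiv_add L b hfm.ennreal_ofReal, hf₁, mul_one, ← ENNReal.ofReal_mul hδ.le,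
    abs_inv, mul_inv_cancel₀ hδ.ne', ENNReal.ofReal_one]

-- `f x` is the limit of `f` along the segment from `x` to any point of positivity, and for
-- a.e. such point all the sample points `(1 - t n) • x + t n • x₀` avoid the null set `f ≠ g`.
lemma eq_of_ae_eq [BorelSpace E] {f g : E → ℝ} (hf : IsLCDensity f) (hg : IsLCDensity g)
    (hfg : f =ᵐ[volume] g) : f = g := by
  funext x
  set t : ℕ → ℝ := fun n => 1 / (n + 1)
  have hsegment : ∀ n, ∀ᵐ x₀ : E,
      f ((1 - t n) • x + t n • x₀) = g ((1 - t n) • x + t n • x₀) := fun n =>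
    ((measurePreserving_add_left volume ((1 - t n) • x)).quasiMeasurePreserving.comp
      (Measure.quasiMeasurePreserving_smul volume (by positivity : t n ≠ 0))).ae hfg
  obtain ⟨x₀, hfx₀, hx₀, hx₀seg⟩ := Measure.exists_mem_of_measure_ne_zero_of_ae
    hf.1.volume_setOf_pos_ne_zero (ae_restrict_of_ae (hfg.and (ae_all_iff.2 hsegment)))
  have ht : Tendsto t atTop (𝓝[Icc 0 1] 0) := tendsto_nhdsWithin_iff.2
    ⟨tendsto_one_div_add_atTop_nhds_zero_nat, Eventually.of_forall fun n =>
      ⟨by positivity, div_le_one_of_le₀ (by simp) (by positivity)⟩⟩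
  have hflim := (hf.2.2.tendsto_segment hf.2.1 x hfx₀).comp ht
  have hgx₀ : 0 < g x₀ := hx₀ ▸ (hfx₀ : 0 < f x₀)
  have hglim := (hg.2.2.tendsto_segment hg.2.1 x hgx₀).comp ht
  exact tendsto_nhds_unique hflim (hglim.congr fun n => (hx₀seg n).symm)

end IsLCDensity

namespace IsLCProj

variable {Q : Measure E} {f g : E → ℝ}

theorem map_linearEquiv_add [BorelSpace E] [IsProbabilityMeasure Q] (hf : IsLCProj Q f)
    (L : E ≃ₗ[ℝ] E) (b : E) :
    IsLCProj (Q.map fun x => L x + b)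
      (fun y => |LinearMap.det (L : E →ₗ[ℝ] E)|⁻¹ * f (L.symm (y - b))) := by
  obtain ⟨hfd, hf₀, hflog, hfmax⟩ := hf
  set T : E → E := fun x => L x + b
  have hT : Measurable T :=
    ((L : E →ₗ[ℝ] E).continuous_of_finiteDimensional.add continuous_const).measurable
  set δ := |LinearMap.det (L : E →ₗ[ℝ] E)|
  have hδ : 0 < δ := abs_pos.2 L.isUnit_det'.ne_zero
  have hg : IsLCDensity (fun y => δ⁻¹ * f (L.symm (y - b))) := by
    convert hfd.comp_linearEquiv_add L.symm (-L.symm b) using 3 with y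
    · rw [LinearEquiv.det_coe_symm, abs_inv]
    · rw [map_sub, sub_eq_add_neg]
  have hlogT : ∀ {k : E → ℝ}, Measurable k →
      ∫ y, Real.log (k y) ∂(Q.map T) = ∫ x, Real.log (k (T x)) ∂Q := fun hk =>
    integral_map hT.aemeasurable hk.log.aestronglyMeasurable
  have hintT : ∀ {k : E → ℝ}, Measurable k → (Integrable (fun y => Real.log (k y)) (Q.map T) ↔
      Integrable (fun x => Real.log (k (T x))) Q) := fun hk =>
    integrable_map_measure hk.log.aestronglyMeasurable hT.aemeasurable
  have hposT : ∀ {k : E → ℝ}, Measurable k →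
      ((∀ᵐ y ∂(Q.map T), 0 < k y) ↔ ∀ᵐ x ∂Q, 0 < k (T x)) := fun hk =>
    ae_map_iff hT.aemeasurable (measurableSet_lt measurable_const hk)
  have hgT : ∀ x, δ⁻¹ * f (L.symm (T x - b)) = δ⁻¹ * f x := by simp [T]
  refine ⟨hg, (hposT hg.1.2.1).2 ?_, (hintT hg.1.2.1).2 ?_, fun k hk hk₀ hklog => ?_⟩
  · simp only [hgT]
    exact hf₀.mono fun x hx => mul_pos (inv_pos.2 hδ) hx
  · simp only [hgT]
    exact hflog.log_const_mul (inv_pos.2 hδ) hf₀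
  · have hkT₀ := (hposT hk.1.2.1).1 hk₀
    have hkTlog := (hintT hk.1.2.1).1 hklog
    have hmax := hfmax _ (hk.comp_linearEquiv_add L b) (hkT₀.mono fun x hx => mul_pos hδ hx)
      (hkTlog.log_const_mul hδ hkT₀)
    rw [integral_log_const_mul hδ hkT₀ hkTlog] at hmax
    rw [hlogT hk.1.2.1, hlogT hg.1.2.1]
    simp only [hgT]
    rw [integral_log_const_mul (inv_pos.2 hδ) hf₀ hflog, Real.log_inv]
    linarith

lemma lintegral_sqrt_mul_ne_zero (hQ : NotConcentratedOnHyperplane Q) [IsProbabilityMeasure Q]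
    (hf : IsLCProj Q f) (hg : IsLCProj Q g) : ∫⁻ x, ENNReal.ofReal √(f x * g x) ≠ 0 := by
  set K := {x | 0 < f x} ∩ {x | 0 < g x}
  have hK : (interior K).Nonempty := hQ.interior_nonempty
    (hf.1.2.2.convex_setOf_pos.inter hg.1.2.2.convex_setOf_pos) (hf.2.1.and hg.2.1)
  have hfm := hf.1.1.2.1
  have hgm := hg.1.1.2.1
  rw [Ne, lintegral_eq_zero_iff (by fun_prop)]
  intro hzero
  refine (isOpen_interior.measure_ne_zero volume hK) (measure_mono_null interior_subset ?_)
  refine measure_mono_null (fun x hx => ?_) hzero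
  simpa using Real.sqrt_pos.2 (mul_pos hx.1 hx.2)

lemma lintegral_sqrt_mul_eq_one (hQ : NotConcentratedOnHyperplane Q) [IsProbabilityMeasure Q]
    (hf : IsLCProj Q f) (hg : IsLCProj Q g) : ∫⁻ x, ENNReal.ofReal √(f x * g x) = 1 := by
  set C := ∫⁻ x, ENNReal.ofReal √(f x * g x)
  have hC0 : C ≠ 0 := lintegral_sqrt_mul_ne_zero hQ hf hg
  obtain ⟨hfd, hf₀, hflog, hfmax⟩ := hf
  obtain ⟨hgd, hg₀, hglog, hgmax⟩ := hg
  have hC1 : C ≤ 1 := hfd.1.lintegral_sqrt_mul_le_one hgd.1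
  have hCtop : C ≠ ⊤ := (hC1.trans_lt ENNReal.one_lt_top).ne
  set c := C.toReal
  have hC : C = ENNReal.ofReal c := (ENNReal.ofReal_toReal hCtop).symm
  have hc : 0 < c := ENNReal.toReal_pos hC0 hCtop
  have hfg₀ : ∀ᵐ x ∂Q, 0 < √(f x * g x) :=
    (hf₀.and hg₀).mono fun x hx => Real.sqrt_pos.2 (mul_pos hx.1 hx.2)
  have hlog : (fun x => Real.log √(f x * g x)) =ᵐ[Q]
      fun x => (Real.log (f x) + Real.log (g x)) / 2 := by
    filter_upwards [hf₀, hg₀] with x hfx hgx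
    rw [Real.log_sqrt (mul_pos hfx hgx).le, Real.log_mul hfx.ne' hgx.ne']
  have hloglog : Integrable (fun x => Real.log √(f x * g x)) Q :=
    ((hflog.add hglog).div_const 2).congr hlog.symm
  have hsame : ∫ x, Real.log (g x) ∂Q = ∫ x, Real.log (f x) ∂Q :=
    (hfmax g hgd hg₀ hglog).antisymm (hgmax f hfd hf₀ hflog)
  have hmax := hfmax _ (hfd.const_mul_sqrt_mul hgd hc hC)
    (hfg₀.mono fun x hx => mul_pos (inv_pos.2 hc) hx) (hloglog.log_const_mul (inv_pos.2 hc) hfg₀)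
  rw [integral_log_const_mul (inv_pos.2 hc) hfg₀ hloglog, integral_congr_ae hlog, integral_div,
    integral_add hflog hglog, hsame, Real.log_inv] at hmax
  have hc1 : 1 ≤ c := by
    by_contra! h
    linarith [Real.log_neg hc h]
  exact hC1.antisymm (hC ▸ ENNReal.one_le_ofReal.2 hc1)

theorem unique [BorelSpace E] (hQ : NotConcentratedOnHyperplane Q) [IsProbabilityMeasure Q]
    (hf : IsLCProj Q f) (hg : IsLCProj Q g) : f = g :=
  hf.1.eq_of_ae_eq hg.1 <| hf.1.1.ae_eq_of_lintegral_sqrt_mul_eq_one hg.1.1 <|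
    lintegral_sqrt_mul_eq_one hQ hf hg

end IsLCProj

end AddHaar

/-- Affine equivariance of the log-concave projection. -/
theorem statement7 (d : ℕ) (P : Measure (Rd d)) (hP : MemP P)
    (A : Matrix (Fin d) (Fin d) ℝ) (hA : A.det ≠ 0) (b : Rd d)
    (fP fQ : Rd d → ℝ) (hfP : IsLCProj P fP)
    (hfQ : IsLCProj (Measure.map (fun x => mulVE A x + b) P) fQ) :
    ∀ x : Rd d, fQ x = |A.det|⁻¹ * fP (mulVE A⁻¹ (x - b)) := by
  obtain ⟨hPprob, -, hPhyp⟩ := hP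
  set β := (EuclideanSpace.basisFun (Fin d) ℝ).toBasis
  have hdet : LinearMap.det (Matrix.toLin β β A) = A.det := LinearMap.det_toLin β A
  set L := (Matrix.toLin β β A).equivOfDetNeZero (hdet ▸ hA)
  have hLsymm : ∀ y, L.symm y = mulVE A⁻¹ y := fun y => L.symm_apply_eq.2 <| by
    change y = mulVE A (mulVE A⁻¹ y)
    simp [mulVE, Matrix.mulVec_mulVec, Matrix.mul_nonsing_inv A (Ne.isUnit hA)]
  have hT : Measurable (fun x => L x + b) :=
    ((L : Rd d →ₗ[ℝ] Rd d).continuous_of_finiteDimensional.add continuous_const).measurable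
  have := Measure.isProbabilityMeasure_map (μ := P) hT.aemeasurable
  -- `L x` unfolds to `mulVE A x`, so `hfQ` is a statement about the push-forward by `L · + b`.
  have hunique := hfQ.unique (NotConcentratedOnHyperplane.map_linearEquiv_add hPhyp L b)
    (hfP.map_linearEquiv_add L b)
  intro x
  simp only [hunique, hLsymm]
  rw [show LinearMap.det (L : Rd d →ₗ[ℝ] Rd d) = A.det from hdet]
end
end
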